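/- arXiv:2301.13079 — 2 statements merged into one kernel-verified Lean document; each statement's English description precedes it below -/
import Mathlib

section
/- For every clustering C of V and every vertex u ∈ V, Σ_{v ∈ V} d̂_uv = Σ_{v ∈ N_u^+} d_uv + Σ_{v ∈ N_u^-} (1 − d_uv) ≤ 8 · max_{z ∈ V} y_C(z). In particular, Σ_{v ∈ V} d̂_uv ≤ 8 · OPT for every u ∈ V. -/
open Finset

/-- Positive neighborhood of `u`. -/
def Np {V : Type*} [Fintype V] (pos : V → V → Bool) (u : V) : Finset V :=
  Finset.univ.filter (fun v => pos u v)

/-- Negative neighborhood of `u`. -/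
def Nm {V : Type*} [Fintype V] (pos : V → V → Bool) (u : V) : Finset V :=
  Finset.univ.filter (fun v => ¬ pos u v)

/-- The correlation metric. -/
noncomputable def corrDist {V : Type*} [Fintype V] [DecidableEq V]
    (pos : V → V → Bool) (u v : V) : ℝ :=
  1 - ((Np pos u ∩ Np pos v).card : ℝ) /
      ((Fintype.card V : ℝ) - ((Nm pos u ∩ Nm pos v).card : ℝ))

/-- Number of disagreements incident to `u` under the clustering `C`. -/
def yC {V : Type*} [Fintype V] [DecidableEq V] (pos : V → V → Bool) (C : V → ℕ) (u : V) : ℕ :=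
  (Finset.univ.filter (fun v => v ≠ u ∧
    ((pos u v ∧ C u ≠ C v) ∨ (¬ (pos u v) ∧ C u = C v)))).card

/-- Optimal value of the Min Max correlation clustering objective. -/
noncomputable def OPT {V : Type*} [Fintype V] [DecidableEq V] (pos : V → V → Bool) : ℕ :=
  sInf { k : ℕ | ∃ C : V → ℕ, k = Finset.univ.sup (yC pos C) }

/-- `d̂`. -/
noncomputable def dhat {V : Type*} [Fintype V] [DecidableEq V]
    (pos : V → V → Bool) (u v : V) : ℝ :=
  if pos u v then corrDist pos u v else 1 - corrDist pos u v

/-- number of samples. -/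
noncomputable def mSample (V : Type*) [Fintype V] (ε : ℝ) : ℕ :=
  ⌈(32 / ε ^ 2) * Real.log (Fintype.card V)⌉₊

/-- Sample space: one subset of `N_u^+` of size `min m |N_u^+|` per vertex `u`. -/
abbrev SampleSpace {V : Type*} [Fintype V] [DecidableEq V]
    (pos : V → V → Bool) (m : ℕ) : Type _ :=
  ∀ u : V, {s : Finset V // s ⊆ Np pos u ∧ s.card = min m (Np pos u).card}

/-- Uniform probability of an event over a finite sample space. -/
noncomputable def prob {Ω : Type*} [Fintype Ω] (E : Set Ω) : ℝ :=
  (E.ncard : ℝ) / (Fintype.card Ω : ℝ)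

noncomputable def West {V : Type*} [Fintype V] [DecidableEq V]
    (pos : V → V → Bool) {m : ℕ} (ω : SampleSpace pos m) (u v : V) : ℝ :=
  if m ≤ (Np pos u).card then
    ((Np pos u).card : ℝ) / m * (((ω u).1 ∩ Np pos v).card : ℝ)
  else ((Np pos u ∩ Np pos v).card : ℝ)

noncomputable def Yest {V : Type*} [Fintype V] [DecidableEq V]
    (pos : V → V → Bool) {m : ℕ} (ω : SampleSpace pos m) (u v : V) : ℝ :=
  if m ≤ (Np pos u).card then
    ((Np pos u).card : ℝ) / m * (((ω u).1 ∩ Nm pos v).card : ℝ)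
  else ((Np pos u ∩ Nm pos v).card : ℝ)

/-- Initial estimate of the correlation metric for a pair labeled with `|N_v^+| ≥ |N_u^+|`. -/
noncomputable def dbar {V : Type*} [Fintype V] [DecidableEq V]
    (pos : V → V → Bool) {m : ℕ} (ω : SampleSpace pos m) (u v : V) : ℝ :=
  (Yest pos ω u v + Yest pos ω v u) / (((Np pos u).card : ℝ) + Yest pos ω v u)

/-- Initial estimate, with the pair relabeled so the vertex with larger
positive neighborhood comes second. -/
noncomputable def dbarS {V : Type*} [Fintype V] [DecidableEq V]
    (pos : V → V → Bool) {m : ℕ} (ω : SampleSpace pos m) (u v : V) : ℝ :=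
  if (Np pos u).card ≤ (Np pos v).card then dbar pos ω u v else dbar pos ω v u

noncomputable def cc1 (ε : ℝ) : ℝ := (1 + ε) / (1 - ε)
noncomputable def hh1 (ε : ℝ) : ℝ := 2 * ε / (1 - ε)
noncomputable def cc2 (ε : ℝ) : ℝ := (1 + ε) / (1 - ε)
noncomputable def hh2 (ε : ℝ) : ℝ := 2 * ε / (1 - ε)
noncomputable def cc3 (ε : ℝ) : ℝ := ((1 + ε) / (1 - ε)) ^ 2
noncomputable def hh3 (ε : ℝ) : ℝ := (2 * ε / (1 - ε)) * (1 + 2 * (1 + ε) / (1 - ε))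
noncomputable def cc4 (ε : ℝ) : ℝ := (2 * cc3 ε + 1) * cc3 ε
noncomputable def hh4 (ε : ℝ) : ℝ := (4 * cc3 ε + 1) * (2 * cc3 ε + 1) * hh3 ε
noncomputable def DD (ε : ℝ) : ℝ := 2 * cc3 ε

/-- Post-processed estimate. -/
noncomputable def dtilde {V : Type*} [Fintype V] [DecidableEq V] (ε : ℝ)
    (pos : V → V → Bool) {m : ℕ} (ω : SampleSpace pos m) (u v : V) : ℝ :=
  if pos u v ∧ dbarS pos ω u v ≤ 2 * hh3 ε then 0
  else if ¬ (pos u v) ∧ 1 / (2 * cc3 ε + 1) ≤ dbarS pos ω u v then 1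
  else dbarS pos ω u v

/-- The radius `r(δ₁, δ₂)` from Appendix B. -/
noncomputable def rr (δ1 δ2 : ℝ) : ℝ :=
  (1 - δ2 - δ1 * δ2 - δ1 ^ 2 * δ2 - δ1 ^ 3 * δ2) /
    (δ1 ^ 2 + δ1 ^ 3 * (δ1 + 1) + δ1 + 1)

noncomputable def c1const (δ1 δ2 : ℝ) : ℝ := δ1 + δ2 / rr δ1 δ2
noncomputable def bconst (δ1 δ2 : ℝ) : ℝ := (c1const δ1 δ2 + 1) * δ1 + δ2 / rr δ1 δ2
noncomputable def c2const (δ1 δ2 : ℝ) : ℝ := δ1 * (bconst δ1 δ2 + 1) + δ2 / rr δ1 δ2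

/-!
Write `M` for the largest number of disagreements at a vertex and `p = |N_u^+| ≥ 1`, and split
the vertices `v` by the sign of `uv` and by whether `C` separates `u` and `v`. The edges at `u`
that are disagreements contribute at most `y(u) ≤ M`. For a positive edge inside a cluster,
`N_u^+ Δ N_v^+` consists of disagreements at `u` or at `v`, so `d_uv ≤ 2M / p`, and there are at
most `p` such `v`. For a negative edge across clusters,
`1 - d_uv = ∑_{w ∈ N_u^+ ∩ N_v^+} 1 / |N_u^+ ∪ N_v^+|`. Exchanging the sums, the pairs with `w` and
`v` in different clusters are disagreements at `w` and contribute at most `M` in total; for the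
others `uw` is a disagreement at `u` (at most `min(M, p)` choices of `w`), and the cluster of `w`
contributes at most `max(2, 2M / p)`, because in a cluster of more than `2M` vertices every member
has more than half of the cluster among its positive neighbours. Altogether `∑_v d̂_uv ≤ 7M`.
-/

section CorrelationClustering

variable {V : Type*} [Fintype V] {pos : V → V → Bool}

@[simp] lemma mem_Np {u v : V} : v ∈ Np pos u ↔ pos u v = true := by simp [Np]

@[simp] lemma mem_Nm {u v : V} : v ∈ Nm pos u ↔ pos u v = false := by simp [Nm]

lemma card_Np_pos {u : V} (hu : pos u u = true) : 0 < (Np pos u).card :=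
  card_pos.mpr ⟨u, mem_Np.mpr hu⟩

variable [DecidableEq V]

def disagreements (pos : V → V → Bool) (C : V → ℕ) (w : V) : Finset V :=
  univ.filter (fun v => v ≠ w ∧ ((pos w v ∧ C w ≠ C v) ∨ (¬ (pos w v) ∧ C w = C v)))

lemma yC_eq_card_disagreements (C : V → ℕ) (w : V) :
    yC pos C w = (disagreements pos C w).card := rfl

@[simp] lemma mem_disagreements {C : V → ℕ} {w v : V} :
    v ∈ disagreements pos C w ↔
      v ≠ w ∧ ((pos w v = true ∧ C w ≠ C v) ∨ (pos w v = false ∧ C w = C v)) := by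
  simp [disagreements]

lemma corrDist_eq_one_sub (u v : V) :
    corrDist pos u v =
      1 - ((Np pos u ∩ Np pos v).card : ℝ) / ((Np pos u ∪ Np pos v).card : ℝ) := by
  have hcompl : Nm pos u ∩ Nm pos v = (Np pos u ∪ Np pos v)ᶜ := by ext; simp
  rw [corrDist, hcompl, card_compl, Nat.cast_sub (card_le_univ _), sub_sub_cancel]

lemma one_sub_corrDist (u v : V) :
    1 - corrDist pos u v =
      ((Np pos u ∩ Np pos v).card : ℝ) / ((Np pos u ∪ Np pos v).card : ℝ) := by
  rw [corrDist_eq_one_sub, sub_sub_cancel]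

lemma corrDist_le_one (u v : V) : corrDist pos u v ≤ 1 := by
  rw [corrDist_eq_one_sub]
  exact sub_le_self _ (by positivity)

lemma one_sub_corrDist_nonneg (u v : V) : 0 ≤ 1 - corrDist pos u v := by
  rw [one_sub_corrDist]
  positivity

lemma one_sub_corrDist_le_one (u v : V) : 1 - corrDist pos u v ≤ 1 := by
  rw [one_sub_corrDist]
  exact div_le_one_of_le₀ (mod_cast card_le_card inter_subset_union) (Nat.cast_nonneg _)

lemma one_sub_corrDist_eq_sum (u v : V) :
    1 - corrDist pos u v =
      ∑ w ∈ Np pos u, if w ∈ Np pos v then 1 / ((Np pos u ∪ Np pos v).card : ℝ) else 0 := by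
  rw [one_sub_corrDist, sum_ite_mem, sum_const, nsmul_eq_mul, mul_one_div]

lemma card_Np_le_card_Np_union (u v : V) :
    ((Np pos u).card : ℝ) ≤ (Np pos u ∪ Np pos v).card :=
  mod_cast card_le_card subset_union_left

lemma sum_dhat_eq (u : V) :
    ∑ v, dhat pos u v =
      (∑ v ∈ Np pos u, corrDist pos u v) + ∑ v ∈ Nm pos u, (1 - corrDist pos u v) := by
  rw [← sum_filter_add_sum_filter_not univ (fun v => pos u v = true)]
  congr 1 <;> refine sum_congr (by ext; simp) fun v hv => ?_ <;> simp_all [dhat]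

end CorrelationClustering

section Disagreements

variable {V : Type*} [Fintype V] [DecidableEq V] {pos : V → V → Bool} {C : V → ℕ}

lemma filter_Np_cut_subset_disagreements (u : V) :
    (Np pos u).filter (fun v => C v ≠ C u) ⊆ disagreements pos C u := by
  intro v hv
  simp only [mem_filter, mem_Np] at hv
  exact mem_disagreements.mpr ⟨fun h => hv.2 (h ▸ rfl), Or.inl ⟨hv.1, Ne.symm hv.2⟩⟩

lemma filter_Nm_uncut_subset_disagreements {u : V} (hu : pos u u = true) :
    (Nm pos u).filter (fun v => C v = C u) ⊆ disagreements pos C u := by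
  intro v hv
  simp only [mem_filter, mem_Nm] at hv
  refine mem_disagreements.mpr ⟨?_, Or.inr ⟨hv.1, hv.2.symm⟩⟩
  rintro rfl
  simp_all

lemma card_cluster_le {v : V} (hv : pos v v = true) :
    (univ.filter (fun x => C x = C v)).card ≤ (Np pos v).card + yC pos C v := by
  have hsub : univ.filter (fun x => C x = C v) ⊆ Np pos v ∪ disagreements pos C v := by
    intro x hx
    simp only [mem_filter, mem_univ, true_and] at hx
    cases hvx : pos v x
    · refine mem_union_right _ (mem_disagreements.mpr ⟨?_, Or.inr ⟨hvx, hx.symm⟩⟩)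
      rintro rfl
      simp_all
    · exact mem_union_left _ (mem_Np.mpr hvx)
  exact (card_le_card hsub).trans (card_union_le _ _)

lemma card_Np_union_le (hsymm : ∀ u v, pos u v = pos v u) (hrefl : ∀ u, pos u u = true)
    {u v : V} (huv : pos u v = true) (hC : C v = C u) :
    (Np pos u ∪ Np pos v).card ≤ (Np pos u ∩ Np pos v).card + yC pos C u + yC pos C v := by
  have hsub : Np pos u ∪ Np pos v ⊆
      (Np pos u ∩ Np pos v) ∪ disagreements pos C u ∪ disagreements pos C v := by
    intro x hx
    -- a vertex of `N_u^+ \ N_v^+` is a disagreement at `u` if `C` separates it from `u`,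
    -- and at `v` otherwise (symmetrically for `N_v^+ \ N_u^+`)
    simp only [mem_union, mem_inter, mem_Np, mem_disagreements] at hx ⊢
    grind [hsymm u x, hsymm v x, hrefl u, hrefl v]
  calc _ ≤ _ := card_le_card hsub
    _ ≤ _ := (card_union_le _ _).trans (Nat.add_le_add_right (card_union_le _ _) _)

end Disagreements

lemma mul_max_two_le {K M p : ℝ} (hp : 0 < p) (hKM : K ≤ M) (hKp : K ≤ p) :
    K * max 2 (2 * M / p) ≤ 2 * M := by
  rcases le_total (2 * M / p) 2 with h | h
  · rw [max_eq_left h]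
    linarith
  · rw [max_eq_right h]
    calc K * (2 * M / p) ≤ p * (2 * M / p) := by gcongr
      _ = 2 * M := by field_simp

section FractionalCost

variable {V : Type*} [Fintype V] [DecidableEq V] {pos : V → V → Bool}
  (hsymm : ∀ u v, pos u v = pos v u) (hrefl : ∀ u, pos u u = true)
  {C : V → ℕ} {M : ℝ} (hM : ∀ w, (yC pos C w : ℝ) ≤ M)

include hM in
lemma nonneg_of_yC_le (w : V) : 0 ≤ M := (Nat.cast_nonneg _).trans (hM w)

lemma sum_corrDist_cut_le (u : V) :
    ∑ v ∈ (Np pos u).filter (fun v => C v ≠ C u), corrDist pos u v ≤ yC pos C u := by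
  calc _ ≤ ((Np pos u).filter (fun v => C v ≠ C u)).card • (1 : ℝ) :=
        sum_le_card_nsmul _ _ _ fun v _ => corrDist_le_one u v
    _ ≤ yC pos C u := by
        rw [nsmul_one, yC_eq_card_disagreements]
        exact mod_cast card_le_card (filter_Np_cut_subset_disagreements u)

lemma sum_one_sub_corrDist_uncut_le {u : V} (hu : pos u u = true) :
    ∑ v ∈ (Nm pos u).filter (fun v => C v = C u), (1 - corrDist pos u v) ≤ yC pos C u := by
  calc _ ≤ ((Nm pos u).filter (fun v => C v = C u)).card • (1 : ℝ) :=
        sum_le_card_nsmul _ _ _ fun v _ => one_sub_corrDist_le_one u v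
    _ ≤ yC pos C u := by
        rw [nsmul_one, yC_eq_card_disagreements]
        exact mod_cast card_le_card (filter_Nm_uncut_subset_disagreements hu)

include hsymm hrefl hM in
lemma corrDist_le_of_same_cluster {u v : V} (huv : pos u v = true) (hC : C v = C u) :
    corrDist pos u v ≤ 2 * M / (Np pos u).card := by
  have hp : (0 : ℝ) < (Np pos u).card := mod_cast card_Np_pos (hrefl u)
  have hU : (0 : ℝ) < (Np pos u ∪ Np pos v).card :=
    hp.trans_le (card_Np_le_card_Np_union u v)
  have hsep : ((Np pos u ∪ Np pos v).card : ℝ) - (Np pos u ∩ Np pos v).card ≤ 2 * M := by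
    have h := (Nat.cast_le (α := ℝ)).mpr (card_Np_union_le hsymm hrefl huv hC)
    push_cast at h
    linarith [hM u, hM v]
  calc corrDist pos u v
      = (((Np pos u ∪ Np pos v).card : ℝ) - (Np pos u ∩ Np pos v).card) /
          (Np pos u ∪ Np pos v).card := by
        rw [corrDist_eq_one_sub]; field_simp
    _ ≤ 2 * M / (Np pos u ∪ Np pos v).card := by gcongr
    _ ≤ 2 * M / (Np pos u).card :=
        div_le_div_of_nonneg_left (mul_nonneg zero_le_two (nonneg_of_yC_le hM u)) hp
          (card_Np_le_card_Np_union u v)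

include hsymm hrefl hM in
lemma sum_corrDist_uncut_le (u : V) :
    ∑ v ∈ (Np pos u).filter (fun v => C v = C u), corrDist pos u v ≤ 2 * M := by
  have hp : (0 : ℝ) < (Np pos u).card := mod_cast card_Np_pos (hrefl u)
  have hM0 := nonneg_of_yC_le hM u
  calc _ ≤ ((Np pos u).filter (fun v => C v = C u)).card • (2 * M / (Np pos u).card) := by
        refine sum_le_card_nsmul _ _ _ fun v hv => ?_
        simp only [mem_filter, mem_Np] at hv
        exact corrDist_le_of_same_cluster hsymm hrefl hM hv.1 hv.2
    _ ≤ (Np pos u).card * (2 * M / (Np pos u).card) := by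
        rw [nsmul_eq_mul]
        gcongr
        exact filter_subset _ _
    _ = 2 * M := by field_simp

include hrefl hM in
lemma sum_inv_card_union_cluster_le (u : V) (c : ℕ) :
    ∑ v ∈ univ.filter (fun v => C v = c), 1 / ((Np pos u ∪ Np pos v).card : ℝ) ≤
      max 2 (2 * M / (Np pos u).card) := by
  set L := univ.filter (fun v => C v = c)
  have hp : (0 : ℝ) < (Np pos u).card := mod_cast card_Np_pos (hrefl u)
  have hL : ∀ v ∈ L, (L.card : ℝ) ≤ (Np pos u ∪ Np pos v).card + M := by
    intro v hv
    obtain rfl : C v = c := (mem_filter.mp hv).2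
    have hcard : (L.card : ℝ) ≤ (Np pos v).card + yC pos C v :=
      mod_cast card_cluster_le (hrefl v)
    have hv : ((Np pos v).card : ℝ) ≤ (Np pos u ∪ Np pos v).card :=
      mod_cast card_le_card subset_union_right
    linarith [hM v]
  by_cases hsmall : (L.card : ℝ) ≤ 2 * M
  · calc _ ≤ L.card • (1 / ((Np pos u).card : ℝ)) :=
          sum_le_card_nsmul _ _ _ fun v _ =>
            one_div_le_one_div_of_le hp (card_Np_le_card_Np_union u v)
      _ ≤ 2 * M / (Np pos u).card := by rw [nsmul_eq_mul, mul_one_div]; gcongr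
      _ ≤ _ := le_max_right _ _
  · push Not at hsmall
    have hL0 : (0 : ℝ) < L.card := by linarith [nonneg_of_yC_le hM u]
    calc _ ≤ L.card • (2 / (L.card : ℝ)) := by
          refine sum_le_card_nsmul _ _ _ fun v hv => ?_
          have hU : (0 : ℝ) < (Np pos u ∪ Np pos v).card :=
            hp.trans_le (card_Np_le_card_Np_union u v)
          rw [div_le_div_iff₀ hU hL0]
          linarith [hL v hv]
      _ = 2 := by rw [nsmul_eq_mul]; field_simp
      _ ≤ _ := le_max_left _ _

include hsymm hrefl hM in
lemma sum_inv_card_union_cut_le (u w : V) :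
    ∑ v ∈ (univ.filter (fun v => C v ≠ C u)).filter (fun v => w ∈ Np pos v),
        1 / ((Np pos u ∪ Np pos v).card : ℝ) ≤
      yC pos C w / (Np pos u).card +
        if C w ≠ C u then max 2 (2 * M / (Np pos u).card) else 0 := by
  set R := (univ.filter (fun v => C v ≠ C u)).filter (fun v => w ∈ Np pos v)
  have hp : (0 : ℝ) < (Np pos u).card := mod_cast card_Np_pos (hrefl u)
  rw [← sum_filter_not_add_sum_filter R (fun v => C v = C w)]
  have hdis : R.filter (fun v => ¬ C v = C w) ⊆ disagreements pos C w := by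
    intro v hv
    simp only [R, mem_filter, mem_univ, true_and, mem_Np] at hv
    exact mem_disagreements.mpr
      ⟨fun h => hv.2 (h ▸ rfl), Or.inl ⟨hsymm w v ▸ hv.1.2, Ne.symm hv.2⟩⟩
  gcongr ?_ + ?_
  · calc _ ≤ (R.filter (fun v => ¬ C v = C w)).card • (1 / ((Np pos u).card : ℝ)) :=
          sum_le_card_nsmul _ _ _ fun v _ =>
            one_div_le_one_div_of_le hp (card_Np_le_card_Np_union u v)
      _ ≤ yC pos C w * (1 / ((Np pos u).card : ℝ)) := by
          rw [nsmul_eq_mul, yC_eq_card_disagreements]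
          gcongr
      _ = _ := mul_one_div _ _
  · split_ifs with hw
    · refine (sum_le_sum_of_subset_of_nonneg ?_ fun _ _ _ => by positivity).trans
        (sum_inv_card_union_cluster_le hrefl hM u (C w))
      intro v hv
      simp only [R, mem_filter, mem_univ, true_and] at hv ⊢
      exact hv.2
    · refine (sum_eq_zero fun v hv => ?_).le
      simp only [R, mem_filter, mem_univ, true_and] at hv
      exact absurd (hv.2.trans (not_not.mp hw)) hv.1.1

include hsymm hrefl hM in
lemma sum_one_sub_corrDist_cut_le (u : V) :
    ∑ v ∈ univ.filter (fun v => C v ≠ C u), (1 - corrDist pos u v) ≤ 3 * M := by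
  have hp : (0 : ℝ) < (Np pos u).card := mod_cast card_Np_pos (hrefl u)
  set p : ℝ := ((Np pos u).card : ℝ)
  set X := max 2 (2 * M / p)
  have hcut : (((Np pos u).filter (fun w => C w ≠ C u)).card : ℝ) ≤ M :=
    (Nat.cast_le.mpr (card_le_card (filter_Np_cut_subset_disagreements u))).trans (hM u)
  calc _ = ∑ w ∈ Np pos u, ∑ v ∈ (univ.filter (fun v => C v ≠ C u)).filter
          (fun v => w ∈ Np pos v), 1 / ((Np pos u ∪ Np pos v).card : ℝ) := by
        simp_rw [one_sub_corrDist_eq_sum, sum_filter (fun v => _ ∈ _)]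
        exact sum_comm
    _ ≤ ∑ w ∈ Np pos u, (yC pos C w / p + if C w ≠ C u then X else 0) :=
        sum_le_sum fun w _ => sum_inv_card_union_cut_le hsymm hrefl hM u w
    _ = ∑ w ∈ Np pos u, yC pos C w / p + ((Np pos u).filter (fun w => C w ≠ C u)).card * X := by
        rw [sum_add_distrib, ← sum_filter, sum_const, nsmul_eq_mul]
    _ ≤ p * (M / p) + 2 * M := by
        refine add_le_add ?_ ?_
        · calc _ ≤ (Np pos u).card • (M / p) :=
                sum_le_card_nsmul _ _ _ fun w _ => by gcongr; exact hM w
            _ = p * (M / p) := nsmul_eq_mul _ _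
        · exact mul_max_two_le hp hcut (Nat.cast_le.mpr (card_filter_le _ _))
    _ = 3 * M := by field_simp; ring

include hsymm hrefl hM in
lemma sum_dhat_le_seven_mul (u : V) :
    ∑ v, dhat pos u v ≤ 7 * M := by
  have hneg_cut :
      ∑ v ∈ (Nm pos u).filter (fun v => ¬ C v = C u), (1 - corrDist pos u v) ≤ 3 * M :=
    (sum_le_sum_of_subset_of_nonneg (filter_subset_filter _ (subset_univ _))
      fun v _ _ => one_sub_corrDist_nonneg u v).trans
      (sum_one_sub_corrDist_cut_le hsymm hrefl hM u)
  rw [sum_dhat_eq, ← sum_filter_add_sum_filter_not (Np pos u) (fun v => C v = C u),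
    ← sum_filter_add_sum_filter_not (Nm pos u) (fun v => C v = C u)]
  linarith [sum_corrDist_uncut_le hsymm hrefl hM u, sum_corrDist_cut_le (pos := pos) (C := C) u,
    sum_one_sub_corrDist_uncut_le (C := C) (hrefl u), hM u]

end FractionalCost

lemma exists_OPT_eq {V : Type*} [Fintype V] [DecidableEq V] (pos : V → V → Bool) :
    ∃ C : V → ℕ, OPT pos = univ.sup (yC pos C) :=
  Nat.sInf_mem (s := {k | ∃ C : V → ℕ, k = univ.sup (yC pos C)}) ⟨_, fun _ => 0, rfl⟩

/-- the fractional cost of the correlation metric at each vertex is at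
most `8 · max_z y_C(z)` for every clustering, in particular at most `8 · OPT`. -/
theorem fractional_cost_le
    {V : Type*} [Fintype V] [DecidableEq V] (pos : V → V → Bool)
    (hsymm : ∀ u v, pos u v = pos v u) (hrefl : ∀ u, pos u u = true)
    (u : V) :
    ((∑ v, dhat pos u v) =
      (∑ v ∈ Np pos u, corrDist pos u v) + ∑ v ∈ Nm pos u, (1 - corrDist pos u v)) ∧
    (∀ C : V → ℕ,
      (∑ v, dhat pos u v) ≤ 8 * ((Finset.univ.sup (yC pos C) : ℕ) : ℝ)) ∧
    (∑ v, dhat pos u v) ≤ 8 * (OPT pos : ℝ) := by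
  have hclustering : ∀ C : V → ℕ,
      ∑ v, dhat pos u v ≤ 8 * ((univ.sup (yC pos C) : ℕ) : ℝ) := fun C => by
    have hM : ∀ w, (yC pos C w : ℝ) ≤ (univ.sup (yC pos C) : ℕ) :=
      fun w => mod_cast le_sup (mem_univ w)
    linarith [sum_dhat_le_seven_mul hsymm hrefl hM u, (Nat.cast_nonneg _).trans (hM u)]
  obtain ⟨C, hC⟩ := exists_OPT_eq pos
  exact ⟨sum_dhat_eq u, hclustering, hC ▸ hclustering C⟩
end

section
/- Let u, v ∈ V with |N_u^+ ∩ N_v^-| ≥ |N_u^+|/2. Then the probability that Y^{(u,v)} ≤ (1−ε)·|N_u^+ ∩ N_v^-| is at most n^{−ε²C(ε)/8} = n^{−4}, and the probability that Y^{(u,v)} ≥ (1+ε)·|N_u^+ ∩ N_v^-| is at most n^{−4}. -/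
open Finset

/-!
When `m ≤ |N_u^+|`, `m·Y = |N_u^+|·|S_u ∩ A|` with `A = N_u^+ ∩ N_v^-`, so each tail is an event
`t ≤ |S ∩ B|` for a uniform `m`-subset `S` of `P = N_u^+` and a fixed `B ⊆ P` (`B = A` for the
upper tail, `B = P \ A` for the lower one). Because `|A| ≥ |P|/2`, the threshold `t` exceeds the
mean `μ = m|B|/|P|` both by the factor `1 + ε` and by at least `εm/2`.

Such a tail is controlled by the `σ`-th factorial moment of the hypergeometric variable:
`E[C(|S ∩ B|, σ)] = C(|B|,σ)·C(m,σ)/C(|P|,σ)`, so by Markov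
`P(|S ∩ B| ≥ t) ≤ ∏_{j<σ} (|B|-j)(m-j)/((|P|-j)(t-j)) ≤ ∏_{j<σ} μ/(t-j)`.
Pairing the factors `j` and `σ-1-j` gives `(t-j)(t-σ+1+j) ≥ t(t+1-σ) ≥ tμ` once `σ ≤ t + 1 - μ`,
hence the square of the probability is at most `(μ/t)^σ ≤ (1+ε)^(-σ)`. With `σ = ⌈εm/2⌉` and
`m ≥ 32 log n / ε²` this is at most `n^(-8)`.

When `m > |N_u^+|`, `Y = |A|` exactly and both events are empty.
-/

namespace Nat

theorem pow_mul_descFactorial_mul_descFactorial_le {b m N : ℕ} (hb : b ≤ N) (hm : m ≤ N)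
    (σ : ℕ) :
    N ^ σ * (b.descFactorial σ * m.descFactorial σ) ≤ (b * m) ^ σ * N.descFactorial σ := by
  rw [pow_eq_prod_const, pow_eq_prod_const, descFactorial_eq_prod_range,
    descFactorial_eq_prod_range, descFactorial_eq_prod_range, ← prod_mul_distrib,
    ← prod_mul_distrib, ← prod_mul_distrib]
  refine prod_le_prod' fun j _ => ?_
  by_cases hjb : j ≤ b
  · by_cases hjm : j ≤ m
    · -- `b m (N - j) - N (b - j) (m - j) = j b (N - m) + j N (m - j)`
      zify [hjb, hjm, hjb.trans hb]
      nlinarith [mul_nonneg (mul_nonneg (Int.natCast_nonneg j) (Int.natCast_nonneg b))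
          (sub_nonneg.2 (Int.ofNat_le.2 hm)),
        mul_nonneg (mul_nonneg (Int.natCast_nonneg j) (Int.natCast_nonneg N))
          (sub_nonneg.2 (Int.ofNat_le.2 hjm))]
    · simp [Nat.sub_eq_zero_of_le (Nat.le_of_not_le hjm)]
  · simp [Nat.sub_eq_zero_of_le (Nat.le_of_not_le hjb)]

theorem pow_le_descFactorial_sq (t σ : ℕ) : (t * (t + 1 - σ)) ^ σ ≤ t.descFactorial σ ^ 2 := by
  have hreflect : ∏ j ∈ range σ, (t - j) = ∏ j ∈ range σ, (t - (σ - 1 - j)) :=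
    (prod_range_reflect (fun j => t - j) σ).symm
  rw [sq, descFactorial_eq_prod_range]
  nth_rw 2 [hreflect]
  rw [← prod_mul_distrib, pow_eq_prod_const]
  refine prod_le_prod' fun j hj => ?_
  rw [mem_range] at hj
  by_cases hσt : σ ≤ t
  · zify [hσt, show j ≤ t by omega, show σ - 1 - j ≤ t by omega, show j ≤ σ - 1 by omega,
      show 1 ≤ σ by omega, show σ ≤ t + 1 by omega]
    nlinarith
  · simp [Nat.sub_eq_zero_of_le (show t + 1 ≤ σ by omega)]

end Nat

namespace Finset
variable {α : Type*} [DecidableEq α]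

theorem sum_choose_card_inter_powersetCard {B P : Finset α} (hBP : B ⊆ P) {m σ : ℕ}
    (hσm : σ ≤ m) :
    ∑ s ∈ P.powersetCard m, (#(s ∩ B)).choose σ = (#B).choose σ * (#P - σ).choose (m - σ) := by
  have hcount : ∀ s, (#(s ∩ B)).choose σ = #{T ∈ B.powersetCard σ | T ⊆ s} := by
    intro s
    rw [← card_powersetCard]
    congr 1
    ext T
    simp only [mem_powersetCard, mem_filter, subset_inter_iff]
    tauto
  calc ∑ s ∈ P.powersetCard m, (#(s ∩ B)).choose σ
      = ∑ T ∈ B.powersetCard σ, #{s ∈ P.powersetCard m | T ⊆ s} := by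
        simp only [hcount, card_filter]
        exact sum_comm
    _ = ∑ T ∈ B.powersetCard σ, (#P - σ).choose (m - σ) := sum_congr rfl fun T hT => by
        obtain ⟨hTB, rfl⟩ := mem_powersetCard.1 hT
        exact card_filter_powersetCard_subset T P m (hTB.trans hBP) hσm
    _ = (#B).choose σ * (#P - σ).choose (m - σ) := by
        rw [sum_const, card_powersetCard, smul_eq_mul]

theorem choose_mul_card_filter_le {B P : Finset α} (hBP : B ⊆ P) {m σ : ℕ}
    (hσm : σ ≤ m) (t : ℕ) :
    t.choose σ * #{s ∈ P.powersetCard m | t ≤ #(s ∩ B)} ≤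
      (#B).choose σ * (#P - σ).choose (m - σ) :=
  calc t.choose σ * #{s ∈ P.powersetCard m | t ≤ #(s ∩ B)}
      = ∑ s ∈ P.powersetCard m with t ≤ #(s ∩ B), t.choose σ := by
        rw [sum_const, smul_eq_mul, mul_comm]
    _ ≤ ∑ s ∈ P.powersetCard m with t ≤ #(s ∩ B), (#(s ∩ B)).choose σ :=
        sum_le_sum fun s hs => Nat.choose_le_choose σ (mem_filter.1 hs).2
    _ ≤ ∑ s ∈ P.powersetCard m, (#(s ∩ B)).choose σ :=
        sum_le_sum_of_subset (filter_subset _ _)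
    _ = (#B).choose σ * (#P - σ).choose (m - σ) := sum_choose_card_inter_powersetCard hBP hσm

theorem pow_mul_card_filter_sq_le {B P : Finset α} (hBP : B ⊆ P) {m σ t : ℕ} (hmP : m ≤ #P)
    (hσm : σ ≤ m) (hσt : σ ≤ t) (hμ : #B * m ≤ #P * (t + 1 - σ)) :
    (#P * t) ^ σ * #{s ∈ P.powersetCard m | t ≤ #(s ∩ B)} ^ 2 ≤
      (#B * m) ^ σ * (#P).choose m ^ 2 := by
  set N := #P
  set F := #{s ∈ P.powersetCard m | t ≤ #(s ∩ B)}
  have hmoment : t.descFactorial σ * F * N.descFactorial σ ≤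
      (#B).descFactorial σ * m.descFactorial σ * N.choose m := by
    simp only [Nat.descFactorial_eq_factorial_mul_choose]
    calc σ.factorial * t.choose σ * F * (σ.factorial * N.choose σ)
        = σ.factorial * σ.factorial * (t.choose σ * F) * N.choose σ := by ring
      _ ≤ σ.factorial * σ.factorial * ((#B).choose σ * (N - σ).choose (m - σ)) * N.choose σ := by
        gcongr σ.factorial * σ.factorial * ?_ * _
        exact choose_mul_card_filter_le hBP hσm t
      _ = σ.factorial * σ.factorial * (#B).choose σ * (N.choose σ * (N - σ).choose (m - σ)) := by
        ring
      _ = σ.factorial * (#B).choose σ * (σ.factorial * m.choose σ) * N.choose m := by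
        rw [← Nat.choose_mul hσm]
        ring
  have hlinear : N ^ σ * t.descFactorial σ * F ≤ (#B * m) ^ σ * N.choose m := by
    refine Nat.le_of_mul_le_mul_right ?_ (Nat.descFactorial_pos.2 (hσm.trans hmP))
    calc N ^ σ * t.descFactorial σ * F * N.descFactorial σ
        = N ^ σ * (t.descFactorial σ * F * N.descFactorial σ) := by ring
      _ ≤ N ^ σ * ((#B).descFactorial σ * m.descFactorial σ * N.choose m) := by gcongr
      _ = N ^ σ * ((#B).descFactorial σ * m.descFactorial σ) * N.choose m := by ring
      _ ≤ (#B * m) ^ σ * N.descFactorial σ * N.choose m := by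
        gcongr ?_ * _
        exact Nat.pow_mul_descFactorial_mul_descFactorial_le (card_le_card hBP) hmP σ
      _ = (#B * m) ^ σ * N.choose m * N.descFactorial σ := by ring
  have hX : 0 < (N * (t + 1 - σ)) ^ σ := by
    rcases σ.eq_zero_or_pos with rfl | hσ
    · simp
    · exact pow_pos (Nat.mul_pos (hσ.trans_le (hσm.trans hmP)) (by omega)) σ
  refine Nat.le_of_mul_le_mul_left ?_ hX
  calc (N * (t + 1 - σ)) ^ σ * ((N * t) ^ σ * F ^ 2)
      = (t * (t + 1 - σ)) ^ σ * (N ^ σ * F) ^ 2 := by ring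
    _ ≤ t.descFactorial σ ^ 2 * (N ^ σ * F) ^ 2 := by
      gcongr ?_ * _
      exact Nat.pow_le_descFactorial_sq t σ
    _ = (N ^ σ * t.descFactorial σ * F) ^ 2 := by ring
    _ ≤ ((#B * m) ^ σ * N.choose m) ^ 2 := by gcongr
    _ = (#B * m) ^ σ * ((#B * m) ^ σ * N.choose m ^ 2) := by ring
    _ ≤ (N * (t + 1 - σ)) ^ σ * ((#B * m) ^ σ * N.choose m ^ 2) := by gcongr

theorem one_add_pow_mul_card_filter_sq_le {B P : Finset α} (hBP : B ⊆ P) (hP : 0 < #P)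
    {m t : ℕ} (hmP : m ≤ #P) {ε : ℝ} (hε0 : 0 < ε) (hε2 : ε ≤ 2)
    (hrel : (1 + ε) * (m * #B / #P) ≤ t) (hdev : ε * m / 2 ≤ t - m * #B / #P) :
    (1 + ε) ^ ⌈ε * m / 2⌉₊ * (#{s ∈ P.powersetCard m | t ≤ #(s ∩ B)} : ℝ) ^ 2 ≤
      ((#P).choose m : ℝ) ^ 2 := by
  set σ := ⌈ε * m / 2⌉₊
  set μ : ℝ := m * #B / #P
  have hPR : (0 : ℝ) < #P := by exact_mod_cast hP
  have hμ : (#P : ℝ) * μ = m * #B := mul_div_cancel₀ _ hPR.ne'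
  have hμ0 : 0 ≤ μ := by positivity
  have hσm : σ ≤ m := Nat.ceil_le.2 (by linarith [mul_le_mul_of_nonneg_right hε2 m.cast_nonneg])
  have hσt : σ ≤ t := Nat.ceil_le.2 (by linarith)
  have hσ : (σ : ℝ) < ε * m / 2 + 1 := Nat.ceil_lt_add_one (by positivity)
  have hnat := pow_mul_card_filter_sq_le hBP hmP hσm hσt (by
    rw [← Nat.cast_le (α := ℝ), Nat.cast_mul, Nat.cast_mul, Nat.cast_sub (hσt.trans t.le_succ),
      mul_comm (#B : ℝ), ← hμ]
    push_cast
    gcongr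
    linarith)
  set F := #{s ∈ P.powersetCard m | t ≤ #(s ∩ B)}
  have hnatR : ((#P : ℝ) * t) ^ σ * (F : ℝ) ^ 2 ≤ ((#B : ℝ) * m) ^ σ * ((#P).choose m : ℝ) ^ 2 := by
    exact_mod_cast hnat
  have hNt : 0 < ((#P : ℝ) * t) ^ σ := by
    rcases σ.eq_zero_or_pos with hσ0 | hσ0
    · simp [hσ0]
    · exact pow_pos (mul_pos hPR (by exact_mod_cast hσ0.trans_le hσt)) σ
  refine le_of_mul_le_mul_left ?_ hNt
  calc ((#P : ℝ) * t) ^ σ * ((1 + ε) ^ σ * (F : ℝ) ^ 2)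
      = (1 + ε) ^ σ * (((#P : ℝ) * t) ^ σ * (F : ℝ) ^ 2) := by ring
    _ ≤ (1 + ε) ^ σ * (((#B : ℝ) * m) ^ σ * ((#P).choose m : ℝ) ^ 2) := by gcongr
    _ = ((1 + ε) * (#P * μ)) ^ σ * ((#P).choose m : ℝ) ^ 2 := by
        rw [hμ, mul_comm (m : ℝ), mul_pow, mul_pow]
        ring
    _ ≤ ((#P : ℝ) * t) ^ σ * ((#P).choose m : ℝ) ^ 2 := by
        gcongr ?_ * _
        refine pow_le_pow_left₀ (by positivity) ?_ σ
        rw [mul_left_comm]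
        exact mul_le_mul_of_nonneg_left hrel hPR.le

end Finset

section Probability

variable {Ω : Type*} [Fintype Ω]

theorem prob_mono {E F : Set Ω} (h : E ⊆ F) : prob E ≤ prob F :=
  div_le_div_of_nonneg_right (by exact_mod_cast Set.ncard_le_ncard h) (Nat.cast_nonneg _)

theorem prob_empty : prob (∅ : Set Ω) = 0 := by
  simp [prob]

theorem prob_eval_preimage {ι : Type*} [Fintype ι] [DecidableEq ι] {C : ι → Type*}
    [∀ i, Fintype (C i)] [∀ i, Nonempty (C i)] (i : ι) (p : C i → Prop) :
    prob {f : ∀ j, C j | p (f i)} = prob {x | p x} := by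
  set Q := Nat.card (∀ j : {j // j ≠ i}, C j)
  have hQ : 0 < Q := Nat.card_pos
  have hnum : {f : ∀ j, C j | p (f i)}.ncard = {x | p x}.ncard * Q := by
    rw [← Nat.card_coe_set_eq, ← Nat.card_coe_set_eq, ← Nat.card_prod]
    exact Nat.card_congr (((Equiv.piSplitAt i C).subtypeEquiv fun _ => Iff.rfl).trans
      Equiv.prodSubtypeFstEquivSubtypeProd)
  have hden : Fintype.card (∀ j, C j) = Fintype.card (C i) * Q := by
    rw [← Nat.card_eq_fintype_card, ← Nat.card_eq_fintype_card, ← Nat.card_prod]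
    exact Nat.card_congr (Equiv.piSplitAt i C)
  rw [prob, prob, hnum, hden, Nat.cast_mul, Nat.cast_mul,
    mul_div_mul_right _ _ (by exact_mod_cast hQ.ne')]

variable {α : Type*}

theorem ncard_setOf_subset_card_eq (P : Finset α) (k : ℕ) (q : Finset α → Prop)
    [DecidablePred q] :
    {x : {s : Finset α // s ⊆ P ∧ #s = k} | q x.1}.ncard = #{s ∈ P.powersetCard k | q s} := by
  rw [← Set.ncard_image_of_injective _ Subtype.val_injective, ← Set.ncard_coe_finset]
  congr 1
  ext s
  simp only [Set.mem_image, Set.mem_ofPred_eq, Subtype.exists, exists_and_left, exists_prop,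
    exists_eq_right_right, coe_filter, mem_powersetCard]
  tauto

theorem prob_setOf_subset_card_eq [Fintype α] [DecidableEq α] (P : Finset α) (k : ℕ)
    (q : Finset α → Prop) [DecidablePred q] :
    prob {x : {s : Finset α // s ⊆ P ∧ #s = k} | q x.1} =
      #{s ∈ P.powersetCard k | q s} / (#P).choose k := by
  have hcard : Fintype.card {s : Finset α // s ⊆ P ∧ #s = k} = (#P).choose k := by
    rw [← Nat.card_eq_fintype_card, ← Set.ncard_univ, ← Set.ofPred_true,
      ncard_setOf_subset_card_eq P k fun _ => True, filter_true, card_powersetCard]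
  rw [prob, hcard, ncard_setOf_subset_card_eq]

end Probability

theorem card_pow_eight_le_one_add_pow_ceil (V : Type*) [Fintype V] [Nonempty V] {ε : ℝ}
    (hε0 : 0 < ε) (hε2 : ε ≤ 2) :
    (Fintype.card V : ℝ) ^ 8 ≤ (1 + ε) ^ ⌈ε * mSample V ε / 2⌉₊ := by
  set m := mSample V ε
  have hn : (0 : ℝ) < Fintype.card V := by exact_mod_cast Fintype.card_pos
  have hlog : ε / 2 ≤ Real.log (1 + ε) := by
    refine le_trans ?_ (Real.le_log_one_add_of_nonneg hε0.le)
    rw [div_le_div_iff₀ two_pos (by linarith)]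
    nlinarith
  have hm : 32 / ε ^ 2 * Real.log (Fintype.card V) ≤ m := Nat.le_ceil _
  have hσ : ε * m / 2 ≤ ⌈ε * m / 2⌉₊ := Nat.le_ceil _
  rw [← Real.exp_log hn, ← Real.exp_log (by linarith : 0 < 1 + ε), ← Real.exp_nat_mul,
    ← Real.exp_nat_mul, Real.exp_le_exp]
  calc ((8 : ℕ) : ℝ) * Real.log (Fintype.card V)
      = ε * (ε / 4) * (32 / ε ^ 2 * Real.log (Fintype.card V)) := by
        field_simp
        ring
    _ ≤ ε * m / 2 * (ε / 2) := by
        rw [show ε * m / 2 * (ε / 2) = ε * (ε / 4) * m by ring]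
        gcongr
    _ ≤ ⌈ε * m / 2⌉₊ * Real.log (1 + ε) := by gcongr

section Sampling

variable {V : Type*} [Fintype V] [DecidableEq V] {pos : V → V → Bool}

theorem prob_sample_eval (m : ℕ) (u : V) (q : Finset V → Prop) [DecidablePred q] :
    prob {ω : SampleSpace pos m | q (ω u).1} =
      #{s ∈ (Np pos u).powersetCard (min m #(Np pos u)) | q s} /
        (#(Np pos u)).choose (min m #(Np pos u)) := by
  have : ∀ w, Nonempty {s : Finset V // s ⊆ Np pos w ∧ #s = min m #(Np pos w)} := fun w =>
    let ⟨s, hs, hc⟩ := exists_subset_card_eq (min_le_right m #(Np pos w))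
    ⟨⟨s, hs, hc⟩⟩
  rw [prob_eval_preimage (C := fun w => {s : Finset V // s ⊆ Np pos w ∧ #s = min m #(Np pos w)})
    u fun x => q x.1]
  exact prob_setOf_subset_card_eq _ _ q

theorem natCast_mul_Yest {m : ℕ} {u : V} (hm : m ≤ #(Np pos u)) (ω : SampleSpace pos m)
    (v : V) : m * Yest pos ω u v = #(Np pos u) * #((ω u).1 ∩ (Np pos u ∩ Nm pos v)) := by
  rw [Yest, if_pos hm, ← inter_assoc, inter_eq_left.2 (ω u).2.1]
  rcases m.eq_zero_or_pos with rfl | hm0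
  · simp [card_eq_zero.1 ((ω u).2.2.trans (min_eq_left hm))]
  · field_simp

theorem Yest_of_lt {m : ℕ} {u : V} (hm : #(Np pos u) < m) (ω : SampleSpace pos m) (v : V) :
    Yest pos ω u v = #(Np pos u ∩ Nm pos v) :=
  if_neg hm.not_ge

end Sampling

section Tails

variable {V : Type*} [Fintype V] [DecidableEq V] {pos : V → V → Bool} {u : V} {ε : ℝ}

theorem prob_le_card_inter_sample_le {B : Finset V} (hB : B ⊆ Np pos u)
    (hP : 0 < #(Np pos u)) (hε0 : 0 < ε) (hε2 : ε ≤ 2) (hm : mSample V ε ≤ #(Np pos u))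
    {t : ℕ} (hrel : (1 + ε) * (mSample V ε * #B / #(Np pos u)) ≤ t)
    (hdev : ε * mSample V ε / 2 ≤ t - mSample V ε * #B / #(Np pos u)) :
    prob {ω : SampleSpace pos (mSample V ε) | t ≤ #((ω u).1 ∩ B)} ≤
      1 / (Fintype.card V : ℝ) ^ 4 := by
  have : Nonempty V := ⟨u⟩
  set F : ℝ := ((#{s ∈ (Np pos u).powersetCard (mSample V ε) | t ≤ #(s ∩ B)} : ℕ) : ℝ)
  set C : ℝ := (((#(Np pos u)).choose (mSample V ε) : ℕ) : ℝ)
  have hC : 0 < C := Nat.cast_pos.2 (Nat.choose_pos hm)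
  rw [prob_sample_eval _ u fun s => t ≤ #(s ∩ B), min_eq_left hm,
    div_le_div_iff₀ hC (by positivity), one_mul]
  refine (pow_le_pow_iff_left₀ (by positivity) hC.le two_ne_zero).1 ?_
  calc (F * (Fintype.card V : ℝ) ^ 4) ^ 2 = (Fintype.card V : ℝ) ^ 8 * F ^ 2 := by ring
    _ ≤ (1 + ε) ^ ⌈ε * mSample V ε / 2⌉₊ * F ^ 2 := by
        gcongr
        exact card_pow_eight_le_one_add_pow_ceil V hε0 hε2
    _ ≤ C ^ 2 := one_add_pow_mul_card_filter_sq_le hB hP hm hε0 hε2 hrel hdev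

theorem prob_one_add_mul_le_Yest_le (hP : 0 < #(Np pos u)) (hε0 : 0 < ε) (hε2 : ε ≤ 2)
    (hm : mSample V ε ≤ #(Np pos u)) {v : V}
    (h : (#(Np pos u) : ℝ) / 2 ≤ #(Np pos u ∩ Nm pos v)) :
    prob {ω : SampleSpace pos (mSample V ε) |
        (1 + ε) * #(Np pos u ∩ Nm pos v) ≤ Yest pos ω u v} ≤ 1 / (Fintype.card V : ℝ) ^ 4 := by
  set m := mSample V ε
  set N := #(Np pos u)
  set A := Np pos u ∩ Nm pos v
  have hN : (0 : ℝ) < N := by exact_mod_cast hP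
  have hμ : (m : ℝ) / 2 ≤ m * #A / N := by
    rw [le_div_iff₀ hN]
    linarith [mul_le_mul_of_nonneg_left h m.cast_nonneg]
  have ht := Nat.le_ceil ((1 + ε) * (m * #A / N))
  refine (prob_mono fun ω hω => ?_).trans (prob_le_card_inter_sample_le inter_subset_left hP hε0
    hε2 hm ht (by linarith [mul_le_mul_of_nonneg_left hμ hε0.le]))
  rw [Set.mem_ofPred_eq] at hω ⊢
  rw [Nat.ceil_le, mul_div_assoc', div_le_iff₀ hN]
  linarith [natCast_mul_Yest hm ω v, mul_le_mul_of_nonneg_left hω m.cast_nonneg]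

theorem prob_Yest_le_one_sub_mul_le (hP : 0 < #(Np pos u)) (hε0 : 0 < ε) (hε2 : ε ≤ 2)
    (hm : mSample V ε ≤ #(Np pos u)) {v : V}
    (h : (#(Np pos u) : ℝ) / 2 ≤ #(Np pos u ∩ Nm pos v)) :
    prob {ω : SampleSpace pos (mSample V ε) |
        Yest pos ω u v ≤ (1 - ε) * #(Np pos u ∩ Nm pos v)} ≤ 1 / (Fintype.card V : ℝ) ^ 4 := by
  set m := mSample V ε
  set N := #(Np pos u)
  set A := Np pos u ∩ Nm pos v
  set B := Np pos u \ A
  have hN : (0 : ℝ) < N := by exact_mod_cast hP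
  have hB : (#B : ℝ) = N - #A := by
    rw [card_sdiff_of_subset inter_subset_left, Nat.cast_sub (card_le_card inter_subset_left)]
  have hμ : (m : ℝ) / 2 ≤ m * #A / N := by
    rw [le_div_iff₀ hN]
    linarith [mul_le_mul_of_nonneg_left h m.cast_nonneg]
  have hμB : (m : ℝ) * #B / N ≤ m * #A / N :=
    div_le_div_of_nonneg_right (mul_le_mul_of_nonneg_left (by linarith) m.cast_nonneg) hN.le
  have ht := Nat.le_ceil (m * #B / N + ε * (m * #A / N))
  have hrel : (1 + ε) * (m * #B / N) ≤ ⌈m * #B / N + ε * (m * #A / N)⌉₊ :=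
    calc (1 + ε) * (m * #B / N) = m * #B / N + ε * (m * #B / N) := by ring
      _ ≤ m * #B / N + ε * (m * #A / N) := by gcongr
      _ ≤ ⌈m * #B / N + ε * (m * #A / N)⌉₊ := ht
  refine (prob_mono fun ω hω => ?_).trans (prob_le_card_inter_sample_le sdiff_subset hP hε0
    hε2 hm hrel (by linarith [mul_le_mul_of_nonneg_left hμ hε0.le]))
  rw [Set.mem_ofPred_eq] at hω ⊢
  have hsplit : #((ω u).1 ∩ B) + #((ω u).1 ∩ A) = m := by
    rw [← inter_sdiff_assoc, inter_eq_left.2 (ω u).2.1, card_sdiff_add_card_inter,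
      (ω u).2.2, min_eq_left hm]
  have hsplitR : (#((ω u).1 ∩ B) : ℝ) = m - #((ω u).1 ∩ A) :=
    eq_sub_of_add_eq (by exact_mod_cast hsplit)
  rw [Nat.ceil_le, hsplitR, hB, mul_div_assoc', ← add_div, div_le_iff₀ hN]
  linarith [natCast_mul_Yest hm ω v, mul_le_mul_of_nonneg_left hω m.cast_nonneg]

end Tails

theorem Yest_concentration_general
    {V : Type*} [Fintype V] [DecidableEq V] (pos : V → V → Bool)
    (hrefl : ∀ u, pos u u = true)
    (ε : ℝ) (hε0 : 0 < ε) (hε1 : ε < 1) (u v : V)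
    (h : ((Np pos u).card : ℝ) / 2 ≤ ((Np pos u ∩ Nm pos v).card : ℝ)) :
    prob {ω : SampleSpace pos (mSample V ε) |
        Yest pos ω u v ≤ (1 - ε) * ((Np pos u ∩ Nm pos v).card : ℝ)} ≤
      1 / (Fintype.card V : ℝ) ^ 4 ∧
    prob {ω : SampleSpace pos (mSample V ε) |
        (1 + ε) * ((Np pos u ∩ Nm pos v).card : ℝ) ≤ Yest pos ω u v} ≤
      1 / (Fintype.card V : ℝ) ^ 4 := by
  have hP : 0 < #(Np pos u) := card_pos.2 ⟨u, by simp [Np, hrefl]⟩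
  have hε2 : ε ≤ 2 := by linarith
  by_cases hm : mSample V ε ≤ #(Np pos u)
  · exact ⟨prob_Yest_le_one_sub_mul_le hP hε0 hε2 hm h,
      prob_one_add_mul_le_Yest_le hP hε0 hε2 hm h⟩
  · have hA : (0 : ℝ) < #(Np pos u ∩ Nm pos v) := by
      have : (0 : ℝ) < #(Np pos u) := by exact_mod_cast hP
      linarith
    have hlower : ¬ (#(Np pos u ∩ Nm pos v) : ℝ) ≤ (1 - ε) * #(Np pos u ∩ Nm pos v) :=
      not_le.2 (by linarith [mul_pos hε0 hA])
    have hupper : ¬ (1 + ε) * (#(Np pos u ∩ Nm pos v) : ℝ) ≤ #(Np pos u ∩ Nm pos v) :=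
      not_le.2 (by linarith [mul_pos hε0 hA])
    simp only [Yest_of_lt (not_le.1 hm), hlower, hupper, Set.ofPred_false, prob_empty]
    constructor <;> positivity

/-- concentration of `Y^{(u,v)}`. -/
theorem Yest_concentration
    {V : Type*} [Fintype V] [DecidableEq V] (pos : V → V → Bool)
    (hsymm : ∀ u v, pos u v = pos v u) (hrefl : ∀ u, pos u u = true)
    (ε : ℝ) (hε0 : 0 < ε) (hε1 : ε < 1) (u v : V)
    (h : ((Np pos u).card : ℝ) / 2 ≤ ((Np pos u ∩ Nm pos v).card : ℝ)) :
    prob {ω : SampleSpace pos (mSample V ε) |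
        Yest pos ω u v ≤ (1 - ε) * ((Np pos u ∩ Nm pos v).card : ℝ)} ≤
      1 / (Fintype.card V : ℝ) ^ 4 ∧
    prob {ω : SampleSpace pos (mSample V ε) |
        (1 + ε) * ((Np pos u ∩ Nm pos v).card : ℝ) ≤ Yest pos ω u v} ≤
      1 / (Fintype.card V : ℝ) ^ 4 :=
  Yest_concentration_general pos hrefl ε hε0 hε1 u v h
end
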